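/- arXiv:2111.12508 — 5 statements merged into one kernel-verified Lean document; each statement's English description precedes it below -/
import Mathlib

section
/- The diagonal category of a double category is a category: the composition of diagonal morphisms (f,u,φ,ψ);(g,v,φ',ψ') := (f;g, u⊙v, (φ;U_g)⊙(id_v;φ'), (ψ;id_u)⊙(U_f;ψ')) is associative up to the identifications induced by the associator, and the tuple (id_X, U_X, U_{id_X}, U_{id_X}) is a two-sided unit for this composition. -/
universe u

/-- The data of a (strict) double category: a vertical category, horizontal
morphisms, squares, identity squares, vertical and horizontal composition of
squares, and unit squares on vertical morphisms. -/
structure DoubleCatData : Type (u + 1) where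
  Obj : Type u
  Ver : Obj → Obj → Type u
  vid : ∀ X, Ver X X
  vcomp : ∀ {X Y Z}, Ver X Y → Ver Y Z → Ver X Z
  Hor : Obj → Obj → Type u
  hid : ∀ X, Hor X X
  hcomp : ∀ {X Y Z}, Hor X Y → Hor Y Z → Hor X Z
  Sq : ∀ {X Y X' Y'}, Hor X Y → Ver X X' → Ver Y Y' → Hor X' Y' → Type u
  sqId : ∀ {X Y} (u : Hor X Y), Sq u (vid X) (vid Y) u
  sqVComp : ∀ {X Y X' Y' X'' Y''} {u : Hor X Y} {u' : Hor X' Y'} {u'' : Hor X'' Y''}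
      {f : Ver X X'} {g : Ver Y Y'} {f' : Ver X' X''} {g' : Ver Y' Y''},
      Sq u f g u' → Sq u' f' g' u'' → Sq u (vcomp f f') (vcomp g g') u''
  sqHComp : ∀ {X Y Z X' Y' Z'} {u : Hor X Y} {v : Hor Y Z} {u' : Hor X' Y'} {v' : Hor Y' Z'}
      {f : Ver X X'} {g : Ver Y Y'} {h : Ver Z Z'},
      Sq u f g u' → Sq v g h v' → Sq (hcomp u v) f h (hcomp u' v')
  sqUId : ∀ {X X'} (f : Ver X X'), Sq (hid X) f f (hid X')

/-- The axioms of a strict double category. -/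
structure IsStrictDoubleCat (D : DoubleCatData.{u}) : Prop where
  vid_comp : ∀ {X Y} (f : D.Ver X Y), D.vcomp (D.vid X) f = f
  vcomp_id : ∀ {X Y} (f : D.Ver X Y), D.vcomp f (D.vid Y) = f
  vassoc : ∀ {W X Y Z} (f : D.Ver W X) (g : D.Ver X Y) (h : D.Ver Y Z),
    D.vcomp (D.vcomp f g) h = D.vcomp f (D.vcomp g h)
  hid_comp : ∀ {X Y} (u : D.Hor X Y), D.hcomp (D.hid X) u = u
  hcomp_id : ∀ {X Y} (u : D.Hor X Y), D.hcomp u (D.hid Y) = u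
  hassoc : ∀ {W X Y Z} (u : D.Hor W X) (v : D.Hor X Y) (w : D.Hor Y Z),
    D.hcomp (D.hcomp u v) w = D.hcomp u (D.hcomp v w)
  sq_id_vcomp : ∀ {X Y X' Y'} {u : D.Hor X Y} {u' : D.Hor X' Y'}
    {f : D.Ver X X'} {g : D.Ver Y Y'} (φ : D.Sq u f g u'),
    HEq (D.sqVComp (D.sqId u) φ) φ
  sq_vcomp_id : ∀ {X Y X' Y'} {u : D.Hor X Y} {u' : D.Hor X' Y'}
    {f : D.Ver X X'} {g : D.Ver Y Y'} (φ : D.Sq u f g u'),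
    HEq (D.sqVComp φ (D.sqId u')) φ
  sq_vassoc : ∀ {X₁ Y₁ X₂ Y₂ X₃ Y₃ X₄ Y₄}
    {u₁ : D.Hor X₁ Y₁} {u₂ : D.Hor X₂ Y₂} {u₃ : D.Hor X₃ Y₃} {u₄ : D.Hor X₄ Y₄}
    {f₁ : D.Ver X₁ X₂} {g₁ : D.Ver Y₁ Y₂} {f₂ : D.Ver X₂ X₃} {g₂ : D.Ver Y₂ Y₃}
    {f₃ : D.Ver X₃ X₄} {g₃ : D.Ver Y₃ Y₄}
    (φ : D.Sq u₁ f₁ g₁ u₂) (ψ : D.Sq u₂ f₂ g₂ u₃) (χ : D.Sq u₃ f₃ g₃ u₄),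
    HEq (D.sqVComp (D.sqVComp φ ψ) χ) (D.sqVComp φ (D.sqVComp ψ χ))
  sq_hid_comp : ∀ {X Y X' Y'} {u : D.Hor X Y} {u' : D.Hor X' Y'}
    {f : D.Ver X X'} {g : D.Ver Y Y'} (φ : D.Sq u f g u'),
    HEq (D.sqHComp (D.sqUId f) φ) φ
  sq_hcomp_id : ∀ {X Y X' Y'} {u : D.Hor X Y} {u' : D.Hor X' Y'}
    {f : D.Ver X X'} {g : D.Ver Y Y'} (φ : D.Sq u f g u'),
    HEq (D.sqHComp φ (D.sqUId g)) φ
  sq_hassoc : ∀ {X Y Z W X' Y' Z' W'}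
    {u : D.Hor X Y} {v : D.Hor Y Z} {w : D.Hor Z W}
    {u' : D.Hor X' Y'} {v' : D.Hor Y' Z'} {w' : D.Hor Z' W'}
    {f : D.Ver X X'} {g : D.Ver Y Y'} {h : D.Ver Z Z'} {k : D.Ver W W'}
    (φ : D.Sq u f g u') (ψ : D.Sq v g h v') (χ : D.Sq w h k w'),
    HEq (D.sqHComp (D.sqHComp φ ψ) χ) (D.sqHComp φ (D.sqHComp ψ χ))
  sqUId_vid : ∀ X, D.sqUId (D.vid X) = D.sqId (D.hid X)
  sqUId_vcomp : ∀ {X X' X''} (f : D.Ver X X') (f' : D.Ver X' X''),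
    D.sqUId (D.vcomp f f') = D.sqVComp (D.sqUId f) (D.sqUId f')
  sqId_hcomp : ∀ {X Y Z} (u : D.Hor X Y) (v : D.Hor Y Z),
    D.sqId (D.hcomp u v) = D.sqHComp (D.sqId u) (D.sqId v)
  interchange : ∀ {X₁ Y₁ Z₁ X₂ Y₂ Z₂ X₃ Y₃ Z₃}
    {u₁ : D.Hor X₁ Y₁} {v₁ : D.Hor Y₁ Z₁} {u₂ : D.Hor X₂ Y₂} {v₂ : D.Hor Y₂ Z₂}
    {u₃ : D.Hor X₃ Y₃} {v₃ : D.Hor Y₃ Z₃}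
    {f₁ : D.Ver X₁ X₂} {g₁ : D.Ver Y₁ Y₂} {h₁ : D.Ver Z₁ Z₂}
    {f₂ : D.Ver X₂ X₃} {g₂ : D.Ver Y₂ Y₃} {h₂ : D.Ver Z₂ Z₃}
    (φ : D.Sq u₁ f₁ g₁ u₂) (ψ : D.Sq v₁ g₁ h₁ v₂)
    (φ' : D.Sq u₂ f₂ g₂ u₃) (ψ' : D.Sq v₂ g₂ h₂ v₃),
    D.sqVComp (D.sqHComp φ ψ) (D.sqHComp φ' ψ') =
      D.sqHComp (D.sqVComp φ φ') (D.sqVComp ψ ψ')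

namespace DoubleCatData

/-- Transport a square along an equality of its left vertical side. -/
def castL (D : DoubleCatData.{u}) {X Y X' Y' : D.Obj} {u : D.Hor X Y} {u' : D.Hor X' Y'}
    {f f' : D.Ver X X'} {g : D.Ver Y Y'} (h : f = f') (φ : D.Sq u f g u') : D.Sq u f' g u' :=
  h ▸ φ

/-- Transport a square along an equality of its right vertical side. -/
def castR (D : DoubleCatData.{u}) {X Y X' Y' : D.Obj} {u : D.Hor X Y} {u' : D.Hor X' Y'}
    {f : D.Ver X X'} {g g' : D.Ver Y Y'} (h : g = g') (φ : D.Sq u f g u') : D.Sq u f g' u' :=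
  h ▸ φ

/-- Transport a square along an equality of its top horizontal side. -/
def castTop (D : DoubleCatData.{u}) {X Y X' Y' : D.Obj} {u u₂ : D.Hor X Y} {u' : D.Hor X' Y'}
    {f : D.Ver X X'} {g : D.Ver Y Y'} (h : u = u₂) (φ : D.Sq u f g u') : D.Sq u₂ f g u' :=
  h ▸ φ

/-- Transport a square along an equality of its bottom horizontal side. -/
def castBot (D : DoubleCatData.{u}) {X Y X' Y' : D.Obj} {u : D.Hor X Y} {u' u₂ : D.Hor X' Y'}
    {f : D.Ver X X'} {g : D.Ver Y Y'} (h : u' = u₂) (φ : D.Sq u f g u') : D.Sq u f g u₂ :=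
  h ▸ φ

end DoubleCatData

/-! STATEMENT 0: the diagonal category of a double category is a category.
A diagonal morphism `X → Y` is a tuple `(f, u, φ, ψ)` with `f` vertical,
`u` horizontal, `φ : id^H_X ⇒ u` over `(id_X, f)` and `ψ : u ⇒ id^H_Y` over
`(f, id_Y)`. -/

/-- A morphism of the diagonal category `𝕋(X,Y)`. -/
structure Diag (D : DoubleCatData.{u}) (X Y : D.Obj) : Type u where
  f : D.Ver X Y
  u : D.Hor X Y
  φ : D.Sq (D.hid X) (D.vid X) f u
  ψ : D.Sq u f (D.vid Y) (D.hid Y)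

/-- The identity diagonal morphism `(id_X, U_X, U_{id_X}, U_{id_X})`. -/
def did (D : DoubleCatData.{u}) (X : D.Obj) : Diag D X X :=
  ⟨D.vid X, D.hid X, D.sqId (D.hid X), D.sqId (D.hid X)⟩

/-- Composition of diagonal morphisms:
`(f,u,φ,ψ);(g,v,φ',ψ') = (f;g, u⊙v, φ pasted with (id_u ⊙ φ'), (ψ ⊙ id_v) pasted with ψ')`. -/
def dcomp (D : DoubleCatData.{u}) (h : IsStrictDoubleCat D) {X Y Z : D.Obj}
    (a : Diag D X Y) (b : Diag D Y Z) : Diag D X Z where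
  f := D.vcomp a.f b.f
  u := D.hcomp a.u b.u
  φ := D.castL (h.vid_comp (D.vid X))
    (D.sqVComp a.φ (D.castTop (h.hcomp_id a.u) (D.sqHComp (D.sqId a.u) b.φ)))
  ψ := D.castR (h.vid_comp (D.vid Z))
    (D.sqVComp (D.castBot (h.hid_comp b.u) (D.sqHComp a.ψ (D.sqId b.u))) b.ψ)


section Helpers

variable {D : DoubleCatData.{u}}

namespace DoubleCatData

theorem heq_castL {X Y X' Y' : D.Obj} {u : D.Hor X Y} {u' : D.Hor X' Y'}
    {f f' : D.Ver X X'} {g : D.Ver Y Y'} (e : f = f') (φ : D.Sq u f g u') :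
    HEq (D.castL e φ) φ := by subst e; rfl

theorem heq_castR {X Y X' Y' : D.Obj} {u : D.Hor X Y} {u' : D.Hor X' Y'}
    {f : D.Ver X X'} {g g' : D.Ver Y Y'} (e : g = g') (φ : D.Sq u f g u') :
    HEq (D.castR e φ) φ := by subst e; rfl

theorem heq_castTop {X Y X' Y' : D.Obj} {u u₂ : D.Hor X Y} {u' : D.Hor X' Y'}
    {f : D.Ver X X'} {g : D.Ver Y Y'} (e : u = u₂) (φ : D.Sq u f g u') :
    HEq (D.castTop e φ) φ := by subst e; rfl

theorem heq_castBot {X Y X' Y' : D.Obj} {u : D.Hor X Y} {u' u₂ : D.Hor X' Y'}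
    {f : D.Ver X X'} {g : D.Ver Y Y'} (e : u' = u₂) (φ : D.Sq u f g u') :
    HEq (D.castBot e φ) φ := by subst e; rfl

theorem sqId_heq {X Y : D.Obj} {u v : D.Hor X Y} (e : u = v) :
    HEq (D.sqId u) (D.sqId v) := by subst e; rfl

end DoubleCatData

open DoubleCatData in
/-- Vertical pasting with a cast fixing up the shared boundary. -/
def vc (D : DoubleCatData.{u}) {X Y X' Y' X'' Y'' : D.Obj}
    {u : D.Hor X Y} {w v : D.Hor X' Y'} {t : D.Hor X'' Y''}
    {f : D.Ver X X'} {g : D.Ver Y Y'} {f' : D.Ver X' X''} {g' : D.Ver Y' Y''}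
    (e : v = w) (φ : D.Sq u f g w) (ψ : D.Sq v f' g' t) :
    D.Sq u (D.vcomp f f') (D.vcomp g g') t :=
  D.sqVComp φ (D.castTop e ψ)

theorem sqVComp_castBot {X Y X' Y' X'' Y'' : D.Obj}
    {u : D.Hor X Y} {t s : D.Hor X' Y'} {r : D.Hor X'' Y''}
    {f : D.Ver X X'} {g : D.Ver Y Y'} {f' : D.Ver X' X''} {g' : D.Ver Y' Y''}
    (e : t = s) (χ : D.Sq u f g t) (ψ : D.Sq s f' g' r) :
    D.sqVComp (D.castBot e χ) ψ = vc D e.symm χ ψ := by subst e; rfl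

theorem vc_congr {X Y X' Y' X'' Y'' : D.Obj}
    {u₁ u₂ : D.Hor X Y} {w₁ w₂ v₁ v₂ : D.Hor X' Y'} {t₁ t₂ : D.Hor X'' Y''}
    {f₁ f₂ : D.Ver X X'} {g₁ g₂ : D.Ver Y Y'} {f₁' f₂' : D.Ver X' X''} {g₁' g₂' : D.Ver Y' Y''}
    {e₁ : v₁ = w₁} {e₂ : v₂ = w₂}
    {φ₁ : D.Sq u₁ f₁ g₁ w₁} {φ₂ : D.Sq u₂ f₂ g₂ w₂}
    {ψ₁ : D.Sq v₁ f₁' g₁' t₁} {ψ₂ : D.Sq v₂ f₂' g₂' t₂}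
    (hu : u₁ = u₂) (hw : w₁ = w₂) (hv : v₁ = v₂) (ht : t₁ = t₂)
    (hf : f₁ = f₂) (hg : g₁ = g₂) (hf' : f₁' = f₂') (hg' : g₁' = g₂')
    (hφ : HEq φ₁ φ₂) (hψ : HEq ψ₁ ψ₂) :
    HEq (vc D e₁ φ₁ ψ₁) (vc D e₂ φ₂ ψ₂) := by
  subst hu hw hv ht hf hg hf' hg'; cases hφ; cases hψ; rfl

theorem sqHComp_congr {X Y Z X' Y' Z' : D.Obj}
    {u₁ u₂ : D.Hor X Y} {v₁ v₂ : D.Hor Y Z} {u₁' u₂' : D.Hor X' Y'} {v₁' v₂' : D.Hor Y' Z'}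
    {f₁ f₂ : D.Ver X X'} {g₁ g₂ : D.Ver Y Y'} {h₁ h₂ : D.Ver Z Z'}
    {φ₁ : D.Sq u₁ f₁ g₁ u₁'} {φ₂ : D.Sq u₂ f₂ g₂ u₂'}
    {ψ₁ : D.Sq v₁ g₁ h₁ v₁'} {ψ₂ : D.Sq v₂ g₂ h₂ v₂'}
    (hu : u₁ = u₂) (hv : v₁ = v₂) (hu' : u₁' = u₂') (hv' : v₁' = v₂')
    (hf : f₁ = f₂) (hg : g₁ = g₂) (hh : h₁ = h₂)
    (hφ : HEq φ₁ φ₂) (hψ : HEq ψ₁ ψ₂) :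
    HEq (D.sqHComp φ₁ ψ₁) (D.sqHComp φ₂ ψ₂) := by
  subst hu hv hu' hv' hf hg hh; cases hφ; cases hψ; rfl

variable (h : IsStrictDoubleCat D)
include h

theorem vc_id_left {X' Y' X'' Y'' : D.Obj} {u v : D.Hor X' Y'} {t : D.Hor X'' Y''}
    {f' : D.Ver X' X''} {g' : D.Ver Y' Y''} (e : v = u) (ψ : D.Sq v f' g' t) :
    HEq (vc D e (D.sqId u) ψ) ψ := by subst e; exact h.sq_id_vcomp ψ

theorem vc_id_right {X Y X' Y' : D.Obj} {u : D.Hor X Y} {w v : D.Hor X' Y'}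
    {f : D.Ver X X'} {g : D.Ver Y Y'} (e : v = w) (φ : D.Sq u f g w) :
    HEq (vc D e φ (D.sqId v)) φ := by subst e; exact h.sq_vcomp_id φ

theorem vc_assoc {X₁ Y₁ X₂ Y₂ X₃ Y₃ X₄ Y₄ : D.Obj}
    {u : D.Hor X₁ Y₁} {w v : D.Hor X₂ Y₂} {t s : D.Hor X₃ Y₃} {r : D.Hor X₄ Y₄}
    {f : D.Ver X₁ X₂} {g : D.Ver Y₁ Y₂} {f' : D.Ver X₂ X₃} {g' : D.Ver Y₂ Y₃}
    {f'' : D.Ver X₃ X₄} {g'' : D.Ver Y₃ Y₄}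
    (e₁ : v = w) (e₂ : s = t)
    (φ : D.Sq u f g w) (ψ : D.Sq v f' g' t) (χ : D.Sq s f'' g'' r) :
    HEq (vc D e₂ (vc D e₁ φ ψ) χ) (vc D e₁ φ (vc D e₂ ψ χ)) := by
  subst e₁ e₂; exact h.sq_vassoc φ ψ χ

theorem vc_interchange {X₁ Y₁ Z₁ X₂ Y₂ Z₂ X₃ Y₃ Z₃ : D.Obj}
    {u₁ : D.Hor X₁ Y₁} {v₁ : D.Hor Y₁ Z₁} {u₂ u₂' : D.Hor X₂ Y₂} {v₂ v₂' : D.Hor Y₂ Z₂}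
    {u₃ : D.Hor X₃ Y₃} {v₃ : D.Hor Y₃ Z₃}
    {f₁ : D.Ver X₁ X₂} {g₁ : D.Ver Y₁ Y₂} {h₁ : D.Ver Z₁ Z₂}
    {f₂ : D.Ver X₂ X₃} {g₂ : D.Ver Y₂ Y₃} {h₂ : D.Ver Z₂ Z₃}
    (e₁ : u₂' = u₂) (e₂ : v₂' = v₂) (e : D.hcomp u₂' v₂' = D.hcomp u₂ v₂)
    (φ : D.Sq u₁ f₁ g₁ u₂) (ψ : D.Sq v₁ g₁ h₁ v₂)
    (φ' : D.Sq u₂' f₂ g₂ u₃) (ψ' : D.Sq v₂' g₂ h₂ v₃) :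
    HEq (vc D e (D.sqHComp φ ψ) (D.sqHComp φ' ψ'))
      (D.sqHComp (vc D e₁ φ φ') (vc D e₂ ψ ψ')) := by
  subst e₁ e₂; exact heq_of_eq (h.interchange φ ψ φ' ψ')

omit h in
theorem Diag.ext' {X Y : D.Obj} {a b : Diag D X Y}
    (hf : a.f = b.f) (hu : a.u = b.u) (hφ : HEq a.φ b.φ) (hψ : HEq a.ψ b.ψ) : a = b := by
  cases a; cases b
  dsimp at hf hu hφ hψ
  subst hf; subst hu
  rw [eq_of_heq hφ, eq_of_heq hψ]

end Helpers

/-- The diagonal category of a (strict) double category is a category: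
the composition of diagonal morphisms is unital and associative. -/
theorem diagonal_is_category (D : DoubleCatData.{u}) (h : IsStrictDoubleCat D) :
    (∀ (X Y : D.Obj) (a : Diag D X Y), dcomp D h (did D X) a = a) ∧
    (∀ (X Y : D.Obj) (a : Diag D X Y), dcomp D h a (did D Y) = a) ∧
    (∀ (X Y Z W : D.Obj) (a : Diag D X Y) (b : Diag D Y Z) (c : Diag D Z W),
      dcomp D h (dcomp D h a b) c = dcomp D h a (dcomp D h b c)) := by
  refine ⟨?_, ?_, ?_⟩
  · -- left unit
    intro X Y a
    refine Diag.ext' (h.vid_comp a.f) (h.hid_comp a.u) ?_ ?_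
    · show HEq (D.castL (h.vid_comp (D.vid X))
        (vc D (h.hcomp_id (D.hid X)) (D.sqId (D.hid X))
          (D.sqHComp (D.sqId (D.hid X)) a.φ))) a.φ
      refine (D.heq_castL _ _).trans ?_
      refine (vc_id_left h _ _).trans ?_
      rw [← h.sqUId_vid]
      exact h.sq_hid_comp a.φ
    · show HEq (D.castR (h.vid_comp (D.vid Y))
        (D.sqVComp (D.castBot (h.hid_comp a.u)
          (D.sqHComp (D.sqId (D.hid X)) (D.sqId a.u))) a.ψ)) a.ψ
      rw [sqVComp_castBot, ← h.sqId_hcomp]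
      refine (D.heq_castR _ _).trans ?_
      refine HEq.trans ?_ (vc_id_left h (u := a.u) rfl a.ψ)
      exact vc_congr (h.hid_comp a.u) (h.hid_comp a.u) rfl rfl rfl rfl rfl rfl
        (D.sqId_heq (h.hid_comp a.u)) HEq.rfl
  · -- right unit
    intro X Y a
    refine Diag.ext' (h.vcomp_id a.f) (h.hcomp_id a.u) ?_ ?_
    · show HEq (D.castL (h.vid_comp (D.vid X))
        (vc D (h.hcomp_id a.u) a.φ (D.sqHComp (D.sqId a.u) (D.sqId (D.hid Y))))) a.φ
      rw [← h.sqId_hcomp]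
      refine (D.heq_castL _ _).trans ?_
      exact vc_id_right h _ a.φ
    · show HEq (D.castR (h.vid_comp (D.vid Y))
        (D.sqVComp (D.castBot (h.hid_comp (D.hid Y))
          (D.sqHComp a.ψ (D.sqId (D.hid Y)))) (D.sqId (D.hid Y)))) a.ψ
      rw [sqVComp_castBot]
      refine (D.heq_castR _ _).trans ?_
      refine (vc_id_right h _ _).trans ?_
      rw [← h.sqUId_vid]
      exact h.sq_hcomp_id a.ψ
  · -- associativity
    intro X Y Z W a b c
    refine Diag.ext' (h.vassoc a.f b.f c.f) (h.hassoc a.u b.u c.u) ?_ ?_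
    · show HEq
        (D.castL (h.vid_comp (D.vid X))
          (vc D (h.hcomp_id (D.hcomp a.u b.u))
            (D.castL (h.vid_comp (D.vid X))
              (vc D (h.hcomp_id a.u) a.φ (D.sqHComp (D.sqId a.u) b.φ)))
            (D.sqHComp (D.sqId (D.hcomp a.u b.u)) c.φ)))
        (D.castL (h.vid_comp (D.vid X))
          (vc D (h.hcomp_id a.u) a.φ
            (D.sqHComp (D.sqId a.u)
              (D.castL (h.vid_comp (D.vid Y))
                (vc D (h.hcomp_id b.u) b.φ (D.sqHComp (D.sqId b.u) c.φ))))))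
      refine ((D.heq_castL _ _).trans ?_).trans (D.heq_castL _ _).symm
      have E2 : D.hcomp a.u (D.hcomp b.u (D.hid Z)) = D.hcomp a.u b.u := by
        rw [h.hcomp_id]
      refine HEq.trans (vc_congr (e₂ := h.hcomp_id (D.hcomp a.u b.u)) rfl rfl rfl rfl
        (h.vid_comp (D.vid X)).symm rfl rfl rfl (D.heq_castL _ _) HEq.rfl) ?_
      refine (vc_assoc h (h.hcomp_id a.u) (h.hcomp_id (D.hcomp a.u b.u)) a.φ _ _).trans ?_
      refine vc_congr rfl rfl rfl (h.hassoc a.u b.u c.u) rfl rfl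
        (h.vid_comp (D.vid X)) rfl HEq.rfl ?_
      rw [h.sqId_hcomp]
      refine HEq.trans (vc_congr (e₂ := E2) rfl rfl (h.hassoc a.u b.u (D.hid Z))
        (h.hassoc a.u b.u c.u) rfl rfl rfl rfl HEq.rfl
        (h.sq_hassoc (D.sqId a.u) (D.sqId b.u) c.φ)) ?_
      refine HEq.trans (vc_interchange h rfl (h.hcomp_id b.u) E2
        (D.sqId a.u) b.φ (D.sqId a.u) (D.sqHComp (D.sqId b.u) c.φ)) ?_
      exact sqHComp_congr rfl rfl rfl rfl (h.vid_comp (D.vid X)) (h.vid_comp (D.vid Y)) rfl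
        (vc_id_right h rfl _) (D.heq_castL _ _).symm
    · show HEq
        (D.castR (h.vid_comp (D.vid W))
          (D.sqVComp (D.castBot (h.hid_comp c.u)
            (D.sqHComp
              (D.castR (h.vid_comp (D.vid Z))
                (D.sqVComp (D.castBot (h.hid_comp b.u)
                  (D.sqHComp a.ψ (D.sqId b.u))) b.ψ))
              (D.sqId c.u))) c.ψ))
        (D.castR (h.vid_comp (D.vid W))
          (D.sqVComp (D.castBot (h.hid_comp (D.hcomp b.u c.u))
            (D.sqHComp a.ψ (D.sqId (D.hcomp b.u c.u))))
            (D.castR (h.vid_comp (D.vid W))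
              (D.sqVComp (D.castBot (h.hid_comp c.u)
                (D.sqHComp b.ψ (D.sqId c.u))) c.ψ))))
      simp only [sqVComp_castBot]
      refine ((D.heq_castR _ _).trans ?_).trans (D.heq_castR _ _).symm
      have E2 : D.hcomp b.u c.u = D.hcomp (D.hcomp (D.hid Y) b.u) c.u := by
        rw [h.hid_comp]
      have key : HEq
          (vc D (h.hid_comp (D.hcomp b.u c.u)).symm
            (D.sqHComp a.ψ (D.sqId (D.hcomp b.u c.u)))
            (D.sqHComp b.ψ (D.sqId c.u)))
          (D.sqHComp
            (D.castR (h.vid_comp (D.vid Z))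
              (vc D (h.hid_comp b.u).symm (D.sqHComp a.ψ (D.sqId b.u)) b.ψ))
            (D.sqId c.u)) := by
        rw [h.sqId_hcomp]
        refine HEq.trans (vc_congr (e₂ := E2) (h.hassoc a.u b.u c.u).symm
          (h.hassoc (D.hid Y) b.u c.u).symm rfl rfl rfl rfl rfl rfl
          ((h.sq_hassoc a.ψ (D.sqId b.u) (D.sqId c.u)).symm) HEq.rfl) ?_
        refine HEq.trans (vc_interchange h (h.hid_comp b.u).symm rfl E2
          (D.sqHComp a.ψ (D.sqId b.u)) (D.sqId c.u) b.ψ (D.sqId c.u)) ?_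
        exact sqHComp_congr rfl rfl rfl rfl rfl (h.vid_comp (D.vid Z)) (h.vid_comp (D.vid W))
          (D.heq_castR _ _).symm (vc_id_right h rfl _)
      refine HEq.trans (vc_congr (e₂ := (h.hid_comp c.u).symm) (h.hassoc a.u b.u c.u)
        rfl rfl rfl rfl (h.vid_comp (D.vid W)).symm rfl rfl key.symm HEq.rfl) ?_
      refine (vc_assoc h (h.hid_comp (D.hcomp b.u c.u)).symm (h.hid_comp c.u).symm
        _ _ c.ψ).trans ?_
      exact vc_congr rfl rfl rfl rfl rfl rfl rfl (h.vid_comp (D.vid W))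
        HEq.rfl (D.heq_castR _ _).symm
end

section
/- Every Rel-enriched double category determines a thin double category: given a vertical category 𝕍, a lax functor 𝔼 : 𝕍×𝕍 → Rel (so id ⊆ 𝔼(id_X,id_Y) and 𝔼(f,g);𝔼(f',g') ⊆ 𝔼(f;f', g;g')), units U_X ∈ 𝔼(X,X) and compositions ⊙ : 𝔼(X,Y)×𝔼(Y,Z) → 𝔼(X,Z) compatible with 𝔼 (i.e. (U_X,U_{X'}) ∈ 𝔼(f,f), and (u,u') ∈ 𝔼(f,g) and (v,v') ∈ 𝔼(g,h) imply (u⊙v, u'⊙v') ∈ 𝔼(f,h)), the data with arrow-category objects ⊎_{X,Y} 𝔼(X,Y), hom-sets 𝔸(u,v) = {(f,g) : (u,v) ∈ 𝔼(f,g)}, identities (id_X,id_Y), composition (f,g);(f',g') = (f;f', g;g'), and horizontal structure given by U and ⊙, forms a double category that is thin (between any u,v and over any f,g there is at most one square). -/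
universe u

/-- A `Rel`-enriched double category: a vertical category `𝕍`, sets of
horizontal morphisms `𝔼(X,Y)`, a lax functor `𝔼 : 𝕍×𝕍 → Rel` given by the
relations `R f g ⊆ 𝔼(X,Y) × 𝔼(X',Y')`, together with horizontal units and
compositions compatible with the relations. -/
structure RelEnrichedDC : Type (u + 1) where
  Obj : Type u
  Ver : Obj → Obj → Type u
  vid : ∀ X, Ver X X
  vcomp : ∀ {X Y Z}, Ver X Y → Ver Y Z → Ver X Z
  vid_comp : ∀ {X Y} (f : Ver X Y), vcomp (vid X) f = f
  vcomp_id : ∀ {X Y} (f : Ver X Y), vcomp f (vid Y) = f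
  vassoc : ∀ {W X Y Z} (f : Ver W X) (g : Ver X Y) (h : Ver Y Z),
    vcomp (vcomp f g) h = vcomp f (vcomp g h)
  Hor : Obj → Obj → Type u
  /-- the relation `𝔼(f,g)` -/
  R : ∀ {X Y X' Y'}, Ver X X' → Ver Y Y' → Hor X Y → Hor X' Y' → Prop
  /-- laxness: `id ⊆ 𝔼(id_X, id_Y)` -/
  lax_id : ∀ {X Y} (u : Hor X Y), R (vid X) (vid Y) u u
  /-- laxness: `𝔼(f,g);𝔼(f',g') ⊆ 𝔼(f;f', g;g')` -/
  lax_comp : ∀ {X Y X' Y' X'' Y''} {f : Ver X X'} {g : Ver Y Y'}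
    {f' : Ver X' X''} {g' : Ver Y' Y''} {u : Hor X Y} {v : Hor X' Y'} {w : Hor X'' Y''},
    R f g u v → R f' g' v w → R (vcomp f f') (vcomp g g') u w
  hid : ∀ X, Hor X X
  hcomp : ∀ {X Y Z}, Hor X Y → Hor Y Z → Hor X Z
  hid_comp : ∀ {X Y} (u : Hor X Y), hcomp (hid X) u = u
  hcomp_id : ∀ {X Y} (u : Hor X Y), hcomp u (hid Y) = u
  hassoc : ∀ {W X Y Z} (u : Hor W X) (v : Hor X Y) (w : Hor Y Z),
    hcomp (hcomp u v) w = hcomp u (hcomp v w)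
  /-- `(U_X, U_{X'}) ∈ 𝔼(f,f)` -/
  unit_R : ∀ {X X'} (f : Ver X X'), R f f (hid X) (hid X')
  /-- `(u,u') ∈ 𝔼(f,g)` and `(v,v') ∈ 𝔼(g,h)` imply `(u⊙v, u'⊙v') ∈ 𝔼(f,h)` -/
  comp_R : ∀ {X Y Z X' Y' Z'} {f : Ver X X'} {g : Ver Y Y'} {h : Ver Z Z'}
    {u : Hor X Y} {v : Hor Y Z} {u' : Hor X' Y'} {v' : Hor Y' Z'},
    R f g u u' → R g h v v' → R f h (hcomp u v) (hcomp u' v')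

/-- The double category associated to a `Rel`-enriched double category: there
is a (unique) square from `u` to `v` over `(f,g)` precisely when
`(u,v) ∈ 𝔼(f,g)`. -/
def RelEnrichedDC.toDouble (Rc : RelEnrichedDC.{u}) : DoubleCatData.{u} where
  Obj := Rc.Obj
  Ver := Rc.Ver
  vid := Rc.vid
  vcomp := Rc.vcomp
  Hor := Rc.Hor
  hid := Rc.hid
  hcomp := Rc.hcomp
  Sq u f g v := ULift.{u} (PLift (Rc.R f g u v))
  sqId u := ⟨⟨Rc.lax_id u⟩⟩
  sqVComp φ ψ := ⟨⟨Rc.lax_comp φ.down.down ψ.down.down⟩⟩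
  sqHComp φ ψ := ⟨⟨Rc.comp_R φ.down.down ψ.down.down⟩⟩
  sqUId f := ⟨⟨Rc.unit_R f⟩⟩

/-- A double category is thin (posetal) when between any two horizontal
morphisms and over any two vertical morphisms there is at most one square. -/
def IsThin (D : DoubleCatData.{u}) : Prop :=
  ∀ {X Y X' Y' : D.Obj} {u : D.Hor X Y} {u' : D.Hor X' Y'}
    {f : D.Ver X X'} {g : D.Ver Y Y'} (φ ψ : D.Sq u f g u'), φ = ψ

/-! STATEMENT 5: every `Rel`-enriched double category determines a thin double
category. -/

theorem relEnriched_toDouble_isThinDoubleCat (Rc : RelEnrichedDC.{u}) :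
    IsStrictDoubleCat Rc.toDouble ∧ IsThin Rc.toDouble := by
  have hsub : ∀ {X Y X' Y' : Rc.toDouble.Obj} {u : Rc.toDouble.Hor X Y}
      {u' : Rc.toDouble.Hor X' Y'} {f : Rc.toDouble.Ver X X'} {g : Rc.toDouble.Ver Y Y'}
      (φ ψ : Rc.toDouble.Sq u f g u'), φ = ψ := by
    intro _ _ _ _ _ _ _ _ φ ψ
    cases φ; cases ψ
    exact congrArg ULift.up (Subsingleton.elim _ _)
  have hheq : ∀ {X Y X' Y' : Rc.toDouble.Obj} {u u₂ : Rc.toDouble.Hor X Y}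
      {u' u₂' : Rc.toDouble.Hor X' Y'} {f f' : Rc.toDouble.Ver X X'}
      {g g' : Rc.toDouble.Ver Y Y'}
      (_ : u = u₂) (_ : u' = u₂') (_ : f = f') (_ : g = g')
      (φ : Rc.toDouble.Sq u f g u') (ψ : Rc.toDouble.Sq u₂ f' g' u₂'),
      HEq φ ψ := by
    rintro _ _ _ _ _ _ _ _ _ _ _ _ rfl rfl rfl rfl φ ψ
    exact heq_of_eq (hsub φ ψ)
  refine ⟨⟨Rc.vid_comp, Rc.vcomp_id, Rc.vassoc, Rc.hid_comp, Rc.hcomp_id, Rc.hassoc,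
    ?_, ?_, ?_, ?_, ?_, ?_, ?_, ?_, ?_, ?_⟩, fun φ ψ => hsub φ ψ⟩
  · intros; exact hheq rfl rfl (Rc.vid_comp _) (Rc.vid_comp _) _ _
  · intros; exact hheq rfl rfl (Rc.vcomp_id _) (Rc.vcomp_id _) _ _
  · intros; exact hheq rfl rfl (Rc.vassoc _ _ _) (Rc.vassoc _ _ _) _ _
  · intros; exact hheq (Rc.hid_comp _) (Rc.hid_comp _) rfl rfl _ _
  · intros; exact hheq (Rc.hcomp_id _) (Rc.hcomp_id _) rfl rfl _ _
  · intros; exact hheq (Rc.hassoc _ _ _) (Rc.hassoc _ _ _) rfl rfl _ _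
  · intros; exact hsub _ _
  · intros; exact hsub _ _
  · intros; exact hsub _ _
  · intros; exact hsub _ _
end

section
/- The passages between thin double categories and Rel-enriched double categories are mutually inverse: starting from a Rel-enriched double category (𝕍,𝔼,U,⊙), constructing the associated thin double category, and then re-extracting a Rel-enriched structure recovers (𝕍,𝔼,U,⊙) up to isomorphism; and starting from a thin double category, extracting its Rel-enriched structure and applying the Grothendieck construction recovers the original double category up to isomorphism. -/
universe u

/-- The `Rel`-enriched double category extracted from a (thin) double
category: `𝔼(f,g) := {(u,v) : ∃ square u ⇒ v over (f,g)}`. -/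
def extractRel (D : DoubleCatData.{u}) (hD : IsStrictDoubleCat D) : RelEnrichedDC.{u} where
  Obj := D.Obj
  Ver := D.Ver
  vid := D.vid
  vcomp := D.vcomp
  vid_comp := hD.vid_comp
  vcomp_id := hD.vcomp_id
  vassoc := hD.vassoc
  Hor := D.Hor
  R f g u v := Nonempty (D.Sq u f g v)
  lax_id u := ⟨D.sqId u⟩
  lax_comp h₁ h₂ := h₁.elim fun φ => h₂.elim fun ψ => ⟨D.sqVComp φ ψ⟩
  hid := D.hid
  hcomp := D.hcomp
  hid_comp := hD.hid_comp
  hcomp_id := hD.hcomp_id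
  hassoc := hD.hassoc
  unit_R f := ⟨D.sqUId f⟩
  comp_R h₁ h₂ := h₁.elim fun φ => h₂.elim fun ψ => ⟨D.sqHComp φ ψ⟩

/-! STATEMENT 8: the two passages between thin double categories and
`Rel`-enriched double categories are mutually inverse up to isomorphism:
(1) starting from a `Rel`-enriched double category, the extracted relation of
the associated thin double category coincides with the original one (and all
other data coincide on the nose); (2) starting from a thin double category,
the Grothendieck construction applied to the extracted `Rel`-enriched
structure has square-sets in bijection with the original ones (and all other
data coincide on the nose). -/

theorem rel_thin_roundtrips :
    (∀ (Rc : RelEnrichedDC.{u}) {X Y X' Y' : Rc.Obj}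
      (f : Rc.Ver X X') (g : Rc.Ver Y Y') (u : Rc.Hor X Y) (v : Rc.Hor X' Y'),
      (Nonempty (Rc.toDouble.Sq u f g v) ↔ Rc.R f g u v)) ∧
    (∀ (D : DoubleCatData.{u}) (hD : IsStrictDoubleCat D) (_ : IsThin D)
      {X Y X' Y' : D.Obj} (f : D.Ver X X') (g : D.Ver Y Y')
      (u : D.Hor X Y) (v : D.Hor X' Y'),
      Nonempty ((extractRel D hD).toDouble.Sq u f g v ≃ D.Sq u f g v)) := by
  constructor
  · intro Rc X Y X' Y' f g u v
    exact ⟨fun h => h.elim fun φ => φ.down.down, fun h => ⟨⟨⟨h⟩⟩⟩⟩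
  · intro D hD thin X Y X' Y' f g u v
    exact ⟨⟨fun φ => Classical.choice φ.down.down,
      fun s => ⟨⟨⟨s⟩⟩⟩, fun φ => rfl, fun s => thin _ s⟩⟩
end

section
/- Framed bicategories (fibrant double categories) correspond exactly to (Set,Set)-enriched double categories: if 𝔼 : 𝕍×𝕍 → Set is a lax functor into the double category of sets (so squares over (f,g) are given by a function 𝔼(f,g) : 𝔼(X,Y) → 𝔼(X',Y') rather than a relation or span), with compatible units and composition, then the Grothendieck construction ∫𝔼 yields a double category in which every vertical morphism f : X → Y has a companion and a conjoint, i.e. ∫𝔼 is a framed bicategory. -/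
universe u

/-- A companion of a vertical morphism `f : X → Y`: a horizontal arrow
`f̂ : X ⇸ Y` together with squares `q : U_X ⇒ f̂` over `(id_X, f)` and
`p : f̂ ⇒ U_Y` over `(f, id_Y)` whose vertical pasting is `U_f` and whose
horizontal pasting is the identity square of `f̂`. -/
structure Companion (D : DoubleCatData.{u}) {X Y : D.Obj} (f : D.Ver X Y) : Type u where
  hat : D.Hor X Y
  up : D.Sq (D.hid X) (D.vid X) f hat
  down : D.Sq hat f (D.vid Y) (D.hid Y)
  vert : HEq (D.sqVComp up down) (D.sqUId f)
  horiz : HEq (D.sqHComp up down) (D.sqId hat)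

/-- A conjoint of a vertical morphism `f : X → Y`: a horizontal arrow
`f̌ : Y ⇸ X` with the analogous squares on the other side. -/
structure Conjoint (D : DoubleCatData.{u}) {X Y : D.Obj} (f : D.Ver X Y) : Type u where
  check : D.Hor Y X
  up : D.Sq (D.hid X) f (D.vid X) check
  down : D.Sq check (D.vid Y) f (D.hid Y)
  vert : HEq (D.sqVComp up down) (D.sqUId f)
  horiz : HEq (D.sqHComp down up) (D.sqId check)

/-- A `(Set,Set)`-enriched double category: a vertical category `𝕍` and a lax
functor `𝔼 : 𝕍×𝕍 → Set` into the double category of sets, functions and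
commutative squares, assigning to a pair of objects the set `𝔼(X,Y)` of
horizontal arrows and to a pair of vertical morphisms a function
`𝔼(f,g) : 𝔼(X,Y) → 𝔼(X',Y')`, together with compatible units and an
associative unital composition. -/
structure SetEnrichedDC : Type (u + 1) where
  Obj : Type u
  Ver : Obj → Obj → Type u
  vid : ∀ X, Ver X X
  vcomp : ∀ {X Y Z}, Ver X Y → Ver Y Z → Ver X Z
  vid_comp : ∀ {X Y} (f : Ver X Y), vcomp (vid X) f = f
  vcomp_id : ∀ {X Y} (f : Ver X Y), vcomp f (vid Y) = f
  vassoc : ∀ {W X Y Z} (f : Ver W X) (g : Ver X Y) (h : Ver Y Z),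
    vcomp (vcomp f g) h = vcomp f (vcomp g h)
  Hor : Obj → Obj → Type u
  /-- the function `𝔼(f,g) : 𝔼(X,Y) → 𝔼(X',Y')` -/
  map : ∀ {X Y X' Y'}, Ver X X' → Ver Y Y' → Hor X Y → Hor X' Y'
  /-- laxness comparison `id → 𝔼(id,id)` (an equality, since `Set` squares are
  commutative squares) -/
  map_id : ∀ {X Y} (u : Hor X Y), map (vid X) (vid Y) u = u
  /-- laxness comparison `𝔼(f,g);𝔼(f',g') → 𝔼(f;f',g;g')` -/
  map_comp : ∀ {X Y X' Y' X'' Y''} (f : Ver X X') (g : Ver Y Y')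
    (f' : Ver X' X'') (g' : Ver Y' Y'') (u : Hor X Y),
    map (vcomp f f') (vcomp g g') u = map f' g' (map f g u)
  hid : ∀ X, Hor X X
  hcomp : ∀ {X Y Z}, Hor X Y → Hor Y Z → Hor X Z
  hid_comp : ∀ {X Y} (u : Hor X Y), hcomp (hid X) u = u
  hcomp_id : ∀ {X Y} (u : Hor X Y), hcomp u (hid Y) = u
  hassoc : ∀ {W X Y Z} (u : Hor W X) (v : Hor X Y) (w : Hor Y Z),
    hcomp (hcomp u v) w = hcomp u (hcomp v w)
  /-- the units `U_X ∈ 𝔼(X,X)` are preserved: squares `U_f` -/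
  map_hid : ∀ {X X'} (f : Ver X X'), map f f (hid X) = hid X'
  /-- the compositions are preserved: squares `⊙_{f,g,h}` -/
  map_hcomp : ∀ {X Y Z X' Y' Z'} (f : Ver X X') (g : Ver Y Y') (h : Ver Z Z')
    (u : Hor X Y) (v : Hor Y Z),
    map f h (hcomp u v) = hcomp (map f g u) (map g h v)

/-- The Grothendieck construction of a `(Set,Set)`-enriched double category:
a square from `u` to `v` over `(f,g)` is a witness that `𝔼(f,g)(u) = v`. -/
def SetEnrichedDC.groth (S : SetEnrichedDC.{u}) : DoubleCatData.{u} where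
  Obj := S.Obj
  Ver := S.Ver
  vid := S.vid
  vcomp := S.vcomp
  Hor := S.Hor
  hid := S.hid
  hcomp := S.hcomp
  Sq u f g v := ULift.{u} (PLift (S.map f g u = v))
  sqId u := ⟨⟨S.map_id u⟩⟩
  sqVComp {X Y X' Y' X'' Y''} {u u' u''} {f g f' g'} φ ψ :=
    ⟨⟨by rw [S.map_comp, φ.down.down, ψ.down.down]⟩⟩
  sqHComp {X Y Z X' Y' Z'} {u v u' v'} {f g h} φ ψ :=
    ⟨⟨by rw [S.map_hcomp f g h, φ.down.down, ψ.down.down]⟩⟩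
  sqUId f := ⟨⟨S.map_hid f⟩⟩

/-! A square of `∫𝔼` is a proof of an equation `𝔼(f,g)(u) = v`, so between two horizontal
arrows over a given pair of vertical morphisms there is at most one square. Every coherence
law for squares therefore holds as soon as the boundaries of its two sides agree, which is a
law of `𝕍` or of the horizontal composition. The companion of `f : X → Y` is `𝔼(id,f)(U_X)`
and its conjoint `𝔼(f,id)(U_X)`; the only square that is not a definitional identity is the
one down to `U_Y`, which exists since `𝔼(f,id)(𝔼(id,f)(U_X)) = 𝔼(f,f)(U_X) = U_Y` (and
symmetrically for the conjoint). -/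

namespace SetEnrichedDC

variable (S : SetEnrichedDC.{u})

instance groth_sq_subsingleton {X Y X' Y' : S.groth.Obj} (u : S.groth.Hor X Y)
    (f : S.groth.Ver X X') (g : S.groth.Ver Y Y') (v : S.groth.Hor X' Y') :
    Subsingleton (S.groth.Sq u f g v) :=
  inferInstanceAs (Subsingleton (ULift (PLift (S.map f g u = v))))

theorem groth_sq_heq {X Y X' Y' : S.groth.Obj} {u u₂ : S.groth.Hor X Y}
    {v v₂ : S.groth.Hor X' Y'} {f f₂ : S.groth.Ver X X'} {g g₂ : S.groth.Ver Y Y'}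
    (hu : u = u₂) (hv : v = v₂) (hf : f = f₂) (hg : g = g₂)
    (φ : S.groth.Sq u f g v) (ψ : S.groth.Sq u₂ f₂ g₂ v₂) : HEq φ ψ := by
  subst hu hv hf hg
  exact heq_of_eq (Subsingleton.elim φ ψ)

theorem groth_isStrictDoubleCat : IsStrictDoubleCat S.groth where
  vid_comp := S.vid_comp
  vcomp_id := S.vcomp_id
  vassoc := S.vassoc
  hid_comp := S.hid_comp
  hcomp_id := S.hcomp_id
  hassoc := S.hassoc
  sq_id_vcomp φ := S.groth_sq_heq rfl rfl (S.vid_comp _) (S.vid_comp _) _ φ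
  sq_vcomp_id φ := S.groth_sq_heq rfl rfl (S.vcomp_id _) (S.vcomp_id _) _ φ
  sq_vassoc _ _ _ := S.groth_sq_heq rfl rfl (S.vassoc _ _ _) (S.vassoc _ _ _) _ _
  sq_hid_comp φ := S.groth_sq_heq (S.hid_comp _) (S.hid_comp _) rfl rfl _ φ
  sq_hcomp_id φ := S.groth_sq_heq (S.hcomp_id _) (S.hcomp_id _) rfl rfl _ φ
  sq_hassoc _ _ _ := S.groth_sq_heq (S.hassoc _ _ _) (S.hassoc _ _ _) rfl rfl _ _
  sqUId_vid _ := Subsingleton.elim _ _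
  sqUId_vcomp _ _ := Subsingleton.elim _ _
  sqId_hcomp _ _ := Subsingleton.elim _ _
  interchange _ _ _ _ := Subsingleton.elim _ _

theorem map_map_hid {X X' Y' Z : S.Obj} {f : S.Ver X X'} {g : S.Ver X Y'} {f' : S.Ver X' Z}
    {g' : S.Ver Y' Z} (h : S.vcomp f f' = S.vcomp g g') :
    S.map f' g' (S.map f g (S.hid X)) = S.hid Z := by
  rw [← S.map_comp, ← h, S.map_hid]

def grothCompanion {X Y : S.Obj} (f : S.Ver X Y) : Companion S.groth f where
  hat := S.map (S.vid X) f (S.hid X)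
  up := ⟨⟨rfl⟩⟩
  down := ⟨⟨S.map_map_hid ((S.vid_comp f).trans (S.vcomp_id f).symm)⟩⟩
  vert := S.groth_sq_heq rfl rfl (S.vid_comp f) (S.vcomp_id f) _ _
  horiz := S.groth_sq_heq (S.hid_comp _) (S.hcomp_id _) rfl rfl _ _

def grothConjoint {X Y : S.Obj} (f : S.Ver X Y) : Conjoint S.groth f where
  check := S.map f (S.vid X) (S.hid X)
  up := ⟨⟨rfl⟩⟩
  down := ⟨⟨S.map_map_hid ((S.vcomp_id f).trans (S.vid_comp f).symm)⟩⟩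
  vert := S.groth_sq_heq rfl rfl (S.vcomp_id f) (S.vid_comp f) _ _
  horiz := S.groth_sq_heq (S.hcomp_id _) (S.hid_comp _) rfl rfl _ _

end SetEnrichedDC

theorem setEnriched_groth_isFramed (S : SetEnrichedDC.{u}) :
    IsStrictDoubleCat S.groth ∧
    ∀ {X Y : S.Obj} (f : S.Ver X Y),
      Nonempty (Companion S.groth f) ∧ Nonempty (Conjoint S.groth f) :=
  ⟨S.groth_isStrictDoubleCat, fun f => ⟨⟨S.grothCompanion f⟩, ⟨S.grothConjoint f⟩⟩⟩
end

section
/- In a framed bicategory, every vertical morphism f : X → Y induces, via its companion f̂ and conjoint f̌, an adjunction f̂ ⊣ f̌ in the horizontal bicategory: there are globular 2-cells η : U_X ⇒ f̂ ⊙ f̌ and ε : f̌ ⊙ f̂ ⇒ U_Y satisfying the triangle identities. -/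
universe u

/-! STATEMENT 13: in a framed bicategory, every vertical morphism `f : X → Y`
induces, via its companion `f̂` and its conjoint `f̌`, an adjunction `f̂ ⊣ f̌`
in the horizontal bicategory: there are globular 2-cells `η : U_X ⇒ f̂ ⊙ f̌`
and `ε : f̌ ⊙ f̂ ⇒ U_Y` satisfying the two triangle identities (stated up to
the strict unitors and associator, i.e. heterogeneously). -/

namespace DoubleCatData

theorem castTop_heq (D : DoubleCatData.{u}) {X Y X' Y' : D.Obj} {u u₂ : D.Hor X Y}
    {u' : D.Hor X' Y'} {f : D.Ver X X'} {g : D.Ver Y Y'} (h : u = u₂) (φ : D.Sq u f g u') :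
    HEq (D.castTop h φ) φ := by subst h; rfl

theorem castBot_heq (D : DoubleCatData.{u}) {X Y X' Y' : D.Obj} {u : D.Hor X Y}
    {u' u₂ : D.Hor X' Y'} {f : D.Ver X X'} {g : D.Ver Y Y'} (h : u' = u₂) (φ : D.Sq u f g u') :
    HEq (D.castBot h φ) φ := by subst h; rfl

theorem sqVComp_congr (D : DoubleCatData.{u}) {X Y X' Y' X'' Y'' : D.Obj}
    {u ua : D.Hor X Y} {u' ua' : D.Hor X' Y'} {u'' ua'' : D.Hor X'' Y''}
    {f fa : D.Ver X X'} {g ga : D.Ver Y Y'} {f' fa' : D.Ver X' X''} {g' ga' : D.Ver Y' Y''}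
    {φ : D.Sq u f g u'} {ψ : D.Sq u' f' g' u''}
    {φa : D.Sq ua fa ga ua'} {ψa : D.Sq ua' fa' ga' ua''}
    (hu : u = ua) (hu' : u' = ua') (hu'' : u'' = ua'')
    (hf : f = fa) (hg : g = ga) (hf' : f' = fa') (hg' : g' = ga')
    (hφ : HEq φ φa) (hψ : HEq ψ ψa) :
    HEq (D.sqVComp φ ψ) (D.sqVComp φa ψa) := by
  subst hu; subst hu'; subst hu''; subst hf; subst hg; subst hf'; subst hg'
  cases hφ; cases hψ; rfl

theorem sqHComp_congr (D : DoubleCatData.{u}) {X Y Z X' Y' Z' : D.Obj}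
    {u ua : D.Hor X Y} {v va : D.Hor Y Z} {u' ua' : D.Hor X' Y'} {v' va' : D.Hor Y' Z'}
    {f fa : D.Ver X X'} {g ga : D.Ver Y Y'} {k ka : D.Ver Z Z'}
    {φ : D.Sq u f g u'} {ψ : D.Sq v g k v'}
    {φa : D.Sq ua fa ga ua'} {ψa : D.Sq va ga ka va'}
    (hu : u = ua) (hv : v = va) (hu' : u' = ua') (hv' : v' = va')
    (hf : f = fa) (hg : g = ga) (hk : k = ka)
    (hφ : HEq φ φa) (hψ : HEq ψ ψa) :
    HEq (D.sqHComp φ ψ) (D.sqHComp φa ψa) := by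
  subst hu; subst hv; subst hu'; subst hv'; subst hf; subst hg; subst hk
  cases hφ; cases hψ; rfl

end DoubleCatData

theorem companion_conjoint_adjunction (D : DoubleCatData.{u})
    (h : IsStrictDoubleCat D)
    (framed : ∀ {X Y : D.Obj} (f : D.Ver X Y),
      Nonempty (Companion D f) ∧ Nonempty (Conjoint D f))
    {X Y : D.Obj} (f : D.Ver X Y) (c : Companion D f) (j : Conjoint D f) :
    ∃ (η : D.Sq (D.hid X) (D.vid X) (D.vid X) (D.hcomp c.hat j.check))
      (ε : D.Sq (D.hcomp j.check c.hat) (D.vid Y) (D.vid Y) (D.hid Y)),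
      HEq
        (D.sqVComp (D.sqHComp η (D.sqId c.hat))
          (D.castTop (h.hassoc c.hat j.check c.hat).symm
            (D.sqHComp (D.sqId c.hat) ε)))
        (D.sqId c.hat) ∧
      HEq
        (D.sqVComp (D.sqHComp (D.sqId j.check) η)
          (D.castTop (h.hassoc j.check c.hat j.check)
            (D.sqHComp ε (D.sqId j.check))))
        (D.sqId j.check) := by
    classical
  refine ⟨D.castTop (h.hid_comp (D.hid X)) (D.sqHComp c.up j.up),
          D.castBot (h.hid_comp (D.hid Y)) (D.sqHComp j.down c.down), ?_, ?_⟩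
  · -- first triangle
    set A := c.hat
    set K := j.check
    have step1 : HEq
        (D.sqVComp (D.sqHComp (D.castTop (h.hid_comp (D.hid X)) (D.sqHComp c.up j.up)) (D.sqId A))
          (D.castTop (h.hassoc A K A).symm
            (D.sqHComp (D.sqId A) (D.castBot (h.hid_comp (D.hid Y)) (D.sqHComp j.down c.down)))))
        (D.sqVComp (D.sqHComp c.up (D.sqHComp j.up (D.sqId A)))
          (D.sqHComp (D.sqId A) (D.sqHComp j.down c.down))) := by
      refine D.sqVComp_congr
        ((congrArg (fun u => D.hcomp (D.hid X) u) (h.hid_comp A)).symm) (h.hassoc A K A)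
        ((congrArg (fun u => D.hcomp A u) (h.hid_comp (D.hid Y))).symm) rfl rfl rfl rfl ?_ ?_
      · refine HEq.trans ?_ (h.sq_hassoc c.up j.up (D.sqId A))
        exact D.sqHComp_congr (h.hid_comp (D.hid X)).symm rfl rfl rfl rfl rfl rfl
          (D.castTop_heq _ _) (HEq.refl _)
      · refine HEq.trans (D.castTop_heq _ _) ?_
        exact D.sqHComp_congr rfl rfl rfl (h.hid_comp (D.hid Y)).symm rfl rfl rfl
          (HEq.refl _) (D.castBot_heq _ _)
    have step2 :
        D.sqVComp (D.sqHComp c.up (D.sqHComp j.up (D.sqId A)))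
          (D.sqHComp (D.sqId A) (D.sqHComp j.down c.down)) =
        D.sqHComp (D.sqVComp c.up (D.sqId A))
          (D.sqVComp (D.sqHComp j.up (D.sqId A)) (D.sqHComp j.down c.down)) :=
      h.interchange c.up (D.sqHComp j.up (D.sqId A)) (D.sqId A) (D.sqHComp j.down c.down)
    have step2b :
        D.sqVComp (D.sqHComp j.up (D.sqId A)) (D.sqHComp j.down c.down) =
        D.sqHComp (D.sqVComp j.up j.down) (D.sqVComp (D.sqId A) c.down) :=
      h.interchange j.up (D.sqId A) j.down c.down
    have step3 : HEq
        (D.sqHComp (D.sqVComp c.up (D.sqId A))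
          (D.sqHComp (D.sqVComp j.up j.down) (D.sqVComp (D.sqId A) c.down)))
        (D.sqHComp c.up (D.sqHComp (D.sqUId f) c.down)) := by
      refine D.sqHComp_congr rfl rfl rfl rfl (h.vid_comp _) (h.vcomp_id _) (h.vcomp_id _)
        (h.sq_vcomp_id c.up) ?_
      exact D.sqHComp_congr rfl rfl rfl rfl (h.vcomp_id _) (h.vid_comp _) (h.vcomp_id _)
        j.vert (h.sq_id_vcomp c.down)
    have step4 : HEq (D.sqHComp c.up (D.sqHComp (D.sqUId f) c.down))
        (D.sqHComp c.up c.down) :=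
      D.sqHComp_congr rfl (h.hid_comp A) rfl (h.hid_comp (D.hid Y)) rfl rfl rfl
        (HEq.refl _) (h.sq_hid_comp c.down)
    exact step1.trans (((heq_of_eq step2).trans
      (D.sqHComp_congr rfl rfl rfl rfl rfl rfl rfl (HEq.refl _)
        (heq_of_eq step2b))).trans (step3.trans (step4.trans c.horiz)))
  · -- second triangle
    set A := c.hat
    set K := j.check
    have step1 : HEq
        (D.sqVComp (D.sqHComp (D.sqId K) (D.castTop (h.hid_comp (D.hid X)) (D.sqHComp c.up j.up)))
          (D.castTop (h.hassoc K A K)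
            (D.sqHComp (D.castBot (h.hid_comp (D.hid Y)) (D.sqHComp j.down c.down)) (D.sqId K))))
        (D.sqVComp (D.sqHComp (D.sqId K) (D.sqHComp c.up j.up))
          (D.sqHComp j.down (D.sqHComp c.down (D.sqId K)))) := by
      refine D.sqVComp_congr
        ((congrArg (fun u => D.hcomp K u) (h.hid_comp (D.hid X))).symm) rfl
        ((congrArg (fun u => D.hcomp (D.hid Y) u) (h.hid_comp K)).symm) rfl rfl rfl rfl ?_ ?_
      · exact D.sqHComp_congr rfl (h.hid_comp (D.hid X)).symm rfl rfl rfl rfl rfl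
          (HEq.refl _) (D.castTop_heq _ _)
      · refine HEq.trans (D.castTop_heq _ _) ?_
        refine HEq.trans ?_ (h.sq_hassoc j.down c.down (D.sqId K))
        exact D.sqHComp_congr rfl rfl (h.hid_comp (D.hid Y)).symm rfl rfl rfl rfl
          (D.castBot_heq _ _) (HEq.refl _)
    have step2 :
        D.sqVComp (D.sqHComp (D.sqId K) (D.sqHComp c.up j.up))
          (D.sqHComp j.down (D.sqHComp c.down (D.sqId K))) =
        D.sqHComp (D.sqVComp (D.sqId K) j.down)
          (D.sqVComp (D.sqHComp c.up j.up) (D.sqHComp c.down (D.sqId K))) :=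
      h.interchange (D.sqId K) (D.sqHComp c.up j.up) j.down (D.sqHComp c.down (D.sqId K))
    have step2b :
        D.sqVComp (D.sqHComp c.up j.up) (D.sqHComp c.down (D.sqId K)) =
        D.sqHComp (D.sqVComp c.up c.down) (D.sqVComp j.up (D.sqId K)) :=
      h.interchange c.up j.up c.down (D.sqId K)
    have step3 : HEq
        (D.sqHComp (D.sqVComp (D.sqId K) j.down)
          (D.sqHComp (D.sqVComp c.up c.down) (D.sqVComp j.up (D.sqId K))))
        (D.sqHComp j.down (D.sqHComp (D.sqUId f) j.up)) := by
      refine D.sqHComp_congr rfl rfl rfl rfl (h.vid_comp _) (h.vid_comp _) (h.vcomp_id _)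
        (h.sq_id_vcomp j.down) ?_
      exact D.sqHComp_congr rfl rfl rfl rfl (h.vid_comp _) (h.vcomp_id _) (h.vcomp_id _)
        c.vert (h.sq_vcomp_id j.up)
    have step4 : HEq (D.sqHComp j.down (D.sqHComp (D.sqUId f) j.up))
        (D.sqHComp j.down j.up) :=
      D.sqHComp_congr rfl (h.hid_comp (D.hid X)) rfl (h.hid_comp K) rfl rfl rfl
        (HEq.refl _) (h.sq_hid_comp j.up)
    exact step1.trans (((heq_of_eq step2).trans
      (D.sqHComp_congr rfl rfl rfl rfl rfl rfl rfl (HEq.refl _)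
        (heq_of_eq step2b))).trans (step3.trans (step4.trans j.horiz)))
end
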